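/- arXiv:2511.14587 — 2 statements merged into one kernel-verified Lean document; each statement's English description precedes it below -/
import Mathlib

section
/- Let p be an odd prime, r ≥ 1, s = ⌊r/2⌋, s' = ⌈r/2⌉, and fix t ∈ Z_p^×, α ∈ Z_p. Define, for a matrix k = (1 + p^{s'}a, p^s b; p^{s+1}c, 1 + p^{s'}d) with a,b,c,d ∈ Z_p, the function value χ(k) = ψ((b + tc)/p^{s'-1} + αd/p^{s-1}) where ψ : Q_p → ℂ^× is an additive character trivial on Z_p. Then for two such matrices k and k', the product kk' is again of this form and χ(kk') = χ(k)·χ(k'). -/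
/-- The matrix `(1 + p^s' a, p^s b; p^(s+1) c, 1 + p^s' d)` with `a,b,c,d ∈ ℤ_p`,
viewed over `ℚ_p`. -/
noncomputable def Umat (p : ℕ) [Fact p.Prime] (s s' : ℕ) (a b c d : ℤ_[p]) :
    Matrix (Fin 2) (Fin 2) ℚ_[p] :=
  !![1 + (p : ℚ_[p]) ^ s' * a, (p : ℚ_[p]) ^ s * b;
     (p : ℚ_[p]) ^ (s + 1) * c, 1 + (p : ℚ_[p]) ^ s' * d]

/-- The value `χ(k) = ψ((b + t c)/p^(s'-1) + α d/p^(s-1))`. -/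
noncomputable def Uchi (p : ℕ) [Fact p.Prime] (s s' : ℕ) (t : ℤ_[p]ˣ) (α : ℤ_[p])
    (ψ : ℚ_[p] → ℂˣ) (a b c d : ℤ_[p]) : ℂˣ :=
  ψ (((b : ℚ_[p]) + (t : ℤ_[p]) * c) / (p : ℚ_[p]) ^ ((s' : ℤ) - 1)
    + (α : ℚ_[p]) * d / (p : ℚ_[p]) ^ ((s : ℤ) - 1))

private lemma chi_aux (p : ℕ) [Fact p.Prime] (s s' e m1 m2 : ℕ)
    (hm1 : m1 + s = s' + 1) (hm2 : m2 + s = e + 1)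
    (T A B C D B' C' D' U V : ℚ_[p]) :
    ((B + B' + (p:ℚ_[p])^s'*U) + T*(C + C' + (p:ℚ_[p])^s'*V))/(p:ℚ_[p])^((s':ℤ)-1)
      + A*(D + D' + (p:ℚ_[p])^s'*(D*D') + (p:ℚ_[p])^e*(C*B'))/(p:ℚ_[p])^((s:ℤ)-1)
    = (((B+T*C)/(p:ℚ_[p])^((s':ℤ)-1) + A*D/(p:ℚ_[p])^((s:ℤ)-1))
      + ((B'+T*C')/(p:ℚ_[p])^((s':ℤ)-1) + A*D'/(p:ℚ_[p])^((s:ℤ)-1)))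
      + ((p:ℚ_[p])*(U + T*V) + A*((p:ℚ_[p])^m1*(D*D') + (p:ℚ_[p])^m2*(C*B'))) := by
  set P : ℚ_[p] := (p:ℚ_[p]) with hPdef
  have hP : P ≠ 0 := Nat.cast_ne_zero.mpr (Fact.out (p := p.Prime)).ne_zero
  have q1 : P^((s':ℤ)-1) = P^s' / P := by
    rw [zpow_sub₀ hP, zpow_natCast, zpow_one]
  have q2 : P^((s:ℤ)-1) = P^s / P := by
    rw [zpow_sub₀ hP, zpow_natCast, zpow_one]
  have fm1 : P^m1 * P^s = P^s' * P := by rw [← pow_add, hm1, pow_succ]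
  have fm2 : P^m2 * P^s = P^e * P := by rw [← pow_add, hm2, pow_succ]
  have hs : P^s ≠ 0 := pow_ne_zero _ hP
  have hs'' : P^s' ≠ 0 := pow_ne_zero _ hP
  rw [q1, q2]
  field_simp
  linear_combination (-(A*(D*D')*P^s')) * fm1 + (-(A*(C*B')*P^s')) * fm2

/-- for an odd prime `p`, `r ≥ 1`, `s = ⌊r/2⌋`, `s' = ⌈r/2⌉`, a unit
`t ∈ ℤ_p^×`, `α ∈ ℤ_p`, and an additive character `ψ : ℚ_p → ℂ^×` trivial on `ℤ_p`:
the product of two matrices of the shape `Umat` is again of that shape, and `χ` is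
multiplicative: `χ(kk') = χ(k)χ(k')`. -/
theorem stmt_14 (p : ℕ) [Fact p.Prime] (hodd : Odd p) (r s s' : ℕ) (hr : 1 ≤ r)
    (hs : s = r / 2) (hs' : s' = (r + 1) / 2) (t : ℤ_[p]ˣ) (α : ℤ_[p])
    (ψ : ℚ_[p] → ℂˣ) (hψ : ∀ x y : ℚ_[p], ψ (x + y) = ψ x * ψ y)
    (hψZ : ∀ x : ℤ_[p], ψ (x : ℚ_[p]) = 1)
    (a b c d a' b' c' d' : ℤ_[p]) :
    (∃ a'' b'' c'' d'' : ℤ_[p],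
      Umat p s s' a b c d * Umat p s s' a' b' c' d' = Umat p s s' a'' b'' c'' d'') ∧
    (∀ a'' b'' c'' d'' : ℤ_[p],
      Umat p s s' a b c d * Umat p s s' a' b' c' d' = Umat p s s' a'' b'' c'' d'' →
      Uchi p s s' t α ψ a'' b'' c'' d''
        = Uchi p s s' t α ψ a b c d * Uchi p s s' t α ψ a' b' c' d') := by
  have hP : (p:ℚ_[p]) ≠ 0 := Nat.cast_ne_zero.mpr (Fact.out (p := p.Prime)).ne_zero
  set e : ℕ := 2*s+1-s' with hedef
  set m1 : ℕ := s'+1-s with hm1def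
  set m2 : ℕ := s+2-s' with hm2def
  have he : s' + e = s + (s+1) := by omega
  have hm1 : m1 + s = s' + 1 := by omega
  have hm2 : m2 + s = e + 1 := by omega
  have hmul : Umat p s s' a b c d * Umat p s s' a' b' c' d' =
      Umat p s s' (a + a' + (p:ℤ_[p])^s' * (a*a') + (p:ℤ_[p])^e * (b*c'))
        (b + b' + (p:ℤ_[p])^s' * (a*b' + b*d'))
        (c + c' + (p:ℤ_[p])^s' * (c*a' + d*c'))
        (d + d' + (p:ℤ_[p])^s' * (d*d') + (p:ℤ_[p])^e * (c*b')) := by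
    have f4 : (p:ℚ_[p])^s' * (p:ℚ_[p])^e = (p:ℚ_[p])^s * (p:ℚ_[p])^(s+1) := by
      rw [← pow_add, ← pow_add, he]
    ext i j
    fin_cases i <;> fin_cases j <;>
      simp [Umat, Matrix.mul_apply, Fin.sum_univ_two] <;> push_cast <;>
      first
        | ring1
        | linear_combination (-((b:ℚ_[p])*c'))*f4
        | linear_combination (-((c:ℚ_[p])*b'))*f4
  refine ⟨⟨_, _, _, _, hmul⟩, ?_⟩
  intro a'' b'' c'' d'' h
  have h2 := hmul.symm.trans h
  have hb : (b'':ℚ_[p]) =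
      ↑b + ↑b' + (p:ℚ_[p])^s' * (↑a * ↑b' + ↑b * ↑d') := by
    have h01 := congrFun (congrFun h2 0) 1
    simp only [Umat, Matrix.cons_val', Matrix.cons_val_zero, Matrix.cons_val_one,
      Matrix.head_cons, Matrix.empty_val', Matrix.cons_val_fin_one, Matrix.head_fin_const,
      Matrix.of_apply] at h01
    have := mul_left_cancel₀ (pow_ne_zero s hP) h01
    rw [← this]; push_cast; ring
  have hc : (c'':ℚ_[p]) =
      ↑c + ↑c' + (p:ℚ_[p])^s' * (↑c * ↑a' + ↑d * ↑c') := by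
    have h10 := congrFun (congrFun h2 1) 0
    simp only [Umat, Matrix.cons_val', Matrix.cons_val_zero, Matrix.cons_val_one,
      Matrix.head_cons, Matrix.empty_val', Matrix.cons_val_fin_one, Matrix.head_fin_const,
      Matrix.of_apply] at h10
    have := mul_left_cancel₀ (pow_ne_zero (s+1) hP) h10
    rw [← this]; push_cast; ring
  have hd : (d'':ℚ_[p]) =
      ↑d + ↑d' + (p:ℚ_[p])^s' * (↑d * ↑d') + (p:ℚ_[p])^e * (↑c * ↑b') := by
    have h11 := congrFun (congrFun h2 1) 1
    simp only [Umat, Matrix.cons_val', Matrix.cons_val_zero, Matrix.cons_val_one,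
      Matrix.head_cons, Matrix.empty_val', Matrix.cons_val_fin_one, Matrix.head_fin_const,
      Matrix.of_apply] at h11
    have h11' := add_left_cancel h11
    have := mul_left_cancel₀ (pow_ne_zero s' hP) h11'
    rw [← this]; push_cast; ring
  simp only [Uchi]
  rw [hb, hc, hd]
  set z : ℤ_[p] := (p:ℤ_[p]) * ((a*b'+b*d') + (t:ℤ_[p])*(c*a'+d*c'))
      + α * ((p:ℤ_[p])^m1 * (d*d') + (p:ℤ_[p])^m2 * (c*b')) with hz
  have key :
      ((↑b + ↑b' + (p:ℚ_[p])^s' * (↑a * ↑b' + ↑b * ↑d')) + (↑(t:ℤ_[p]):ℚ_[p]) *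
          (↑c + ↑c' + (p:ℚ_[p])^s' * (↑c * ↑a' + ↑d * ↑c'))) / (p:ℚ_[p])^((s':ℤ)-1)
        + (↑α:ℚ_[p]) * (↑d + ↑d' + (p:ℚ_[p])^s' * (↑d * ↑d') + (p:ℚ_[p])^e * (↑c * ↑b'))
            / (p:ℚ_[p])^((s:ℤ)-1)
      = (((↑b:ℚ_[p]) + ↑(t:ℤ_[p]) * ↑c) / (p:ℚ_[p])^((s':ℤ)-1)
            + (↑α:ℚ_[p]) * ↑d / (p:ℚ_[p])^((s:ℤ)-1))
        + (((↑b':ℚ_[p]) + ↑(t:ℤ_[p]) * ↑c') / (p:ℚ_[p])^((s':ℤ)-1)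
            + (↑α:ℚ_[p]) * ↑d' / (p:ℚ_[p])^((s:ℤ)-1))
        + (↑z:ℚ_[p]) := by
    push_cast [hz]
    linear_combination chi_aux p s s' e m1 m2 hm1 hm2
      (↑(t:ℤ_[p]):ℚ_[p]) (↑α:ℚ_[p]) ↑b ↑c ↑d ↑b' ↑c' ↑d'
      ((↑a:ℚ_[p]) * ↑b' + (↑b:ℚ_[p]) * ↑d') ((↑c:ℚ_[p]) * ↑a' + (↑d:ℚ_[p]) * ↑c')
  rw [key, hψ, hψ, hψZ z, mul_one]
end

section
/- Let p ≥ 5 be a prime, d a squarefree integer with E = Q_p(√d) a ramified quadratic extension of Q_p, and r ≥ 1. Then the quotient group O_E^× / (Z_p^× · U_E^{2r}) is cyclic of order p^r, generated by the class of 1 + √d. -/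
/-- let `p ≥ 5` be prime, `d` a squarefree integer with
`E = ℚ_p(√d)/ℚ_p` ramified (i.e. `p ∣ d`), and `r ≥ 1`.  Then
`O_E^×/(ℤ_p^× · U_E^{2r})` is cyclic of order `p^r`, generated by the class of
`1 + √d`.  Here the ring of integers `O_E` is axiomatized as a commutative
`ℤ_p`-algebra, free with basis `{1, π}` where `π = √d`, i.e. `π² = d`, with maximal
ideal `P = (π)` and `U_E^{2r} = 1 + P^{2r}`. -/
theorem stmt_18 (p : ℕ) [Fact p.Prime] (hp5 : 5 ≤ p) (d : ℤ) (hd : Squarefree d)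
    (hram : (p : ℤ) ∣ d) (r : ℕ) (hr : 1 ≤ r)
    (O : Type*) [CommRing O] [Algebra ℤ_[p] O] (π : O)
    (hbasis : ∀ x : O, ∃! ab : ℤ_[p] × ℤ_[p],
      x = algebraMap ℤ_[p] O ab.1 + algebraMap ℤ_[p] O ab.2 * π)
    (hπ : π ^ 2 = algebraMap ℤ_[p] O (d : ℤ_[p]))
    (H : Subgroup Oˣ)
    (hH : ∀ x : Oˣ, x ∈ H ↔ ∃ z : ℤ_[p]ˣ, ∃ y : O,
      (x : O) = algebraMap ℤ_[p] O (z : ℤ_[p]) * y ∧ y - 1 ∈ Ideal.span {π} ^ (2 * r)) :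
    Nat.card (Oˣ ⧸ H) = p ^ r ∧
    ∃ v : Oˣ, (v : O) = 1 + π ∧
      Subgroup.zpowers ((QuotientGroup.mk v : Oˣ ⧸ H)) = ⊤ := by
  classical
  have hp : p.Prime := Fact.out
  set alg := algebraMap ℤ_[p] O with halg
  -- `p` is not a unit in ℤ_[p]
  have hnu : ¬ IsUnit (p : ℤ_[p]) := by
    rw [PadicInt.isUnit_iff, PadicInt.norm_p]
    intro h
    have hp1 : (1:ℝ) < p := by exact_mod_cast hp.one_lt
    have h2 : (p:ℝ)⁻¹ < 1 := by rw [inv_lt_one_iff₀]; right; exact hp1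
    rw [h] at h2; exact lt_irrefl _ h2
  have hu : ∀ {a : ℤ_[p]}, ¬ (p:ℤ_[p]) ∣ a → IsUnit a := by
    intro a h
    rw [PadicInt.isUnit_iff]
    rcases lt_or_eq_of_le (PadicInt.norm_le_one a) with h' | h'
    · exact (h ((PadicInt.norm_lt_one_iff_dvd a).mp h')).elim
    · exact h'
  have hnd : ∀ {a : ℤ_[p]}, IsUnit a → ¬ (p:ℤ_[p]) ∣ a :=
    fun ha hdvd => hnu (isUnit_of_dvd_unit hdvd ha)
  -- write d = p * m with m a unit
  obtain ⟨m0, hm0⟩ := hram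
  have hpm0 : ¬ (p:ℤ) ∣ m0 := by
    rintro ⟨k, hk⟩
    have hsq : ((p:ℤ)) * (p:ℤ) ∣ d := ⟨k, by rw [hm0, hk]; ring⟩
    have := hd _ hsq
    rw [Int.isUnit_iff] at this
    omega
  set m : ℤ_[p] := (m0 : ℤ_[p]) with hmdef
  have hm : (d : ℤ_[p]) = (p:ℤ_[p]) * m := by rw [hmdef, hm0]; push_cast; ring
  have hmu : IsUnit m := by
    apply hu
    intro hdvd
    exact hpm0 ((PadicInt.norm_int_lt_one_iff_dvd m0).mp
      ((PadicInt.norm_lt_one_iff_dvd _).mpr hdvd))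
  have hpd : (p:ℤ_[p]) ∣ (d:ℤ_[p]) := ⟨m, hm⟩
  -- injectivity of coordinates
  have hinj : ∀ {a b a' b' : ℤ_[p]}, alg a + alg b * π = alg a' + alg b' * π →
      a = a' ∧ b = b' := by
    intro a b a' b' h
    obtain ⟨ab, hab, huniq⟩ := hbasis (alg a' + alg b' * π)
    have h1 := huniq (a, b) h.symm
    have h2 := huniq (a', b') rfl
    have h3 := h1.trans h2.symm
    exact ⟨congrArg Prod.fst h3, congrArg Prod.snd h3⟩
  -- powers of π
  have hπk : ∀ k : ℕ, π ^ k = (alg ((d:ℤ_[p])))^(k/2) * π ^ (k % 2) := by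
    intro k
    conv_lhs => rw [← Nat.div_add_mod k 2]
    rw [pow_add, pow_mul, hπ]
  have hπ2r : π ^ (2*r) = alg ((d:ℤ_[p])^r) := by
    rw [pow_mul, hπ, ← map_pow]
  -- product expansion
  have hexpand : ∀ a b a' b' : ℤ_[p], (alg a + alg b * π) * (alg a' + alg b' * π)
      = alg (a*a' + d*(b*b')) + alg (a*b' + a'*b) * π := by
    intro a b a' b'
    have hd' : ((d:ℤ) : ℤ_[p]) = (d : ℤ_[p]) := rfl
    simp only [map_add, map_mul, hd']
    linear_combination (alg b * alg b') * hπ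
  -- units of the form 1 + c·π, with explicit inverses
  have hUc : ∀ c : ℤ_[p], ∃ u : Oˣ, ((u:O) = 1 + alg c * π) ∧
      ∃ ν : ℤ_[p], IsUnit ν ∧ ((↑u⁻¹ : O) = alg ν * (1 - alg c * π)) := by
    intro c
    have h1 : ¬ (p:ℤ_[p]) ∣ (1 - (d:ℤ_[p]) * c^2) := by
      rintro ⟨k, hk⟩
      have : (p:ℤ_[p]) ∣ 1 := ⟨k + m*c^2, by rw [hm] at hk; linear_combination hk⟩
      exact hnu (isUnit_of_dvd_one this)
    obtain ⟨w, hw⟩ := hu h1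
    have h2 : (1 + alg c * π) * (1 - alg c * π) = alg (1 - (d:ℤ_[p]) * c^2) := by
      simp only [map_sub, map_mul, map_one, map_pow]
      linear_combination (- alg c * alg c) * hπ
    have hmul : (1 + alg c * π) * (alg ↑w⁻¹ * (1 - alg c * π)) = 1 := by
      calc (1 + alg c * π) * (alg ↑w⁻¹ * (1 - alg c * π))
          = alg ↑w⁻¹ * ((1 + alg c * π) * (1 - alg c * π)) := by ring
        _ = alg ↑w⁻¹ * alg (1 - (d:ℤ_[p]) * c^2) := by rw [h2]
        _ = alg (↑w⁻¹ * (1 - (d:ℤ_[p]) * c^2)) := by rw [map_mul]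
        _ = 1 := by rw [← hw, Units.inv_mul, map_one]
    exact ⟨⟨1 + alg c * π, alg ↑w⁻¹ * (1 - alg c * π), hmul,
      (mul_comm _ _).trans hmul⟩, rfl, ↑w⁻¹, Units.isUnit _, rfl⟩
  choose U hU hUinv using hUc
  have hUc' : ∀ c : ℤ_[p], IsUnit (1 + alg c * π) := fun c => ⟨U c, hU c⟩
  -- the first coordinate of any unit is a unit
  have hux : ∀ x : Oˣ, ∃ a b : ℤ_[p], IsUnit a ∧ (x:O) = alg a + alg b * π := by
    intro x
    obtain ⟨⟨a, b⟩, hab, -⟩ := hbasis (x:O)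
    obtain ⟨⟨a', b'⟩, hab', -⟩ := hbasis ((x⁻¹:Oˣ):O)
    have hxx : (1:O) = alg (a*a' + d*(b*b')) + alg (a*b' + a'*b) * π := by
      rw [← hexpand, ← hab, ← hab']
      exact (Units.mul_inv x).symm
    have h1 : (1:O) = alg 1 + alg 0 * π := by simp
    obtain ⟨ha1, -⟩ := hinj (hxx.symm.trans h1)
    refine ⟨a, b, ?_, hab⟩
    apply hu
    rintro ⟨k, hk⟩
    have : (p:ℤ_[p]) ∣ 1 := ⟨k*a' + m*(b*b'), by
      rw [← ha1, hk, hm]; ring⟩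
    exact hnu (isUnit_of_dvd_one this)
  -- membership criterion for H
  have hcrit : ∀ (x : Oˣ) (a b : ℤ_[p]), IsUnit a → (x : O) = alg a + alg b * π →
      (x ∈ H ↔ (p:ℤ_[p])^r ∣ b) := by
    intro x a b ha hx
    constructor
    · intro hxH
      obtain ⟨z, y, hzy, hy⟩ := (hH x).mp hxH
      rw [Ideal.span_singleton_pow, Ideal.mem_span_singleton] at hy
      obtain ⟨t, ht⟩ := hy
      obtain ⟨⟨s, w⟩, hsw, -⟩ := hbasis t
      have hy' : y = 1 + alg ((d:ℤ_[p])^r) * (alg s + alg w * π) := by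
        have h1 : y = 1 + π^(2*r) * t := by rw [← ht]; ring
        rw [h1, hπ2r, hsw]
      have hxx : (x:O) = alg (↑z*(1 + (d:ℤ_[p])^r*s)) + alg (↑z*((d:ℤ_[p])^r*w)) * π := by
        rw [hzy, hy']
        simp only [map_mul, map_add, map_one, map_pow]
        ring
      rw [hx] at hxx
      obtain ⟨-, hb⟩ := hinj hxx
      rw [hb, hm]
      exact ⟨↑z * (m^r * w), by ring⟩
    · rintro ⟨b', hb'⟩
      refine (hH x).mpr ⟨ha.unit, alg ↑ha.unit⁻¹ * (x:O), ?_, ?_⟩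
      · rw [← mul_assoc, ← map_mul, Units.mul_inv, map_one, one_mul]
      · have h1 : (↑ha.unit⁻¹ : ℤ_[p]) * a = 1 := by
          have := Units.inv_mul ha.unit
          rwa [ha.unit_spec] at this
        have h1' : alg ↑ha.unit⁻¹ * alg a = 1 := by rw [← map_mul, h1, map_one]
        have hval : alg ↑ha.unit⁻¹ * (x:O) - 1 = alg (↑ha.unit⁻¹ * b) * π := by
          rw [hx]
          simp only [map_mul, map_add]
          linear_combination h1'
        rw [Ideal.span_singleton_pow, Ideal.mem_span_singleton, hval, hπ2r]
        obtain ⟨mi, hmi⟩ := hmu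
        have hmi1 : (↑mi⁻¹ : ℤ_[p]) * m = 1 := by
          have := Units.inv_mul mi
          rwa [hmi] at this
        refine ⟨alg (↑ha.unit⁻¹ * b' * (↑mi⁻¹:ℤ_[p])^r) * π, ?_⟩
        rw [← mul_assoc, ← map_mul]
        congr 1
        apply congrArg
        rw [hb', hm]
        have h2 : ((↑mi⁻¹:ℤ_[p]) * m)^r = 1 := by rw [hmi1, one_pow]
        linear_combination (-(↑ha.unit⁻¹ * b' * (p:ℤ_[p])^r)) * h2
  -- binomial expansion of (1 + t·π)^p
  have hbin : ∀ t : ℤ_[p], ∃ A B γ w : ℤ_[p],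
      (1 + alg t * π)^p = alg A + alg B * π ∧
      A = 1 + (p:ℤ_[p]) * γ ∧ B = (p:ℤ_[p]) * t + (p:ℤ_[p]) * (d:ℤ_[p]) * t^3 * w := by
    intro t
    set g : ℕ → ℤ_[p] := fun k => (p.choose k : ℤ_[p]) * t^k * (d:ℤ_[p])^(k/2) with hg
    have hexp : (1 + alg t * π)^p
        = ∑ k ∈ Finset.range (p+1), alg (g k) * π^(k % 2) := by
      rw [add_comm (1:O), add_pow]
      apply Finset.sum_congr rfl
      intro k hk
      have hc : ((p.choose k : ℕ) : O) = alg ((p.choose k : ℕ) : ℤ_[p]) :=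
        (map_natCast alg _).symm
      rw [mul_pow, one_pow, mul_one, hπk k, hc, hg]
      simp only [map_mul, map_pow]
      ring
    rw [← Finset.sum_filter_add_sum_filter_not (Finset.range (p+1))
      (fun k => k % 2 = 0)] at hexp
    set A := ∑ k ∈ (Finset.range (p+1)).filter (fun k => k % 2 = 0), g k with hA
    set B := ∑ k ∈ (Finset.range (p+1)).filter (fun k => ¬ k % 2 = 0), g k with hB
    have h1 : ∑ k ∈ (Finset.range (p+1)).filter (fun k => k % 2 = 0), alg (g k) * π^(k % 2)
        = alg A := by
      rw [hA, map_sum]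
      apply Finset.sum_congr rfl
      intro k hk
      have h2 : k % 2 = 0 := (Finset.mem_filter.mp hk).2
      rw [h2, pow_zero, mul_one]
    have h2 : ∑ k ∈ (Finset.range (p+1)).filter (fun k => ¬ k % 2 = 0), alg (g k) * π^(k % 2)
        = alg B * π := by
      rw [hB, map_sum, Finset.sum_mul]
      apply Finset.sum_congr rfl
      intro k hk
      have h3 : k % 2 = 1 := by have := (Finset.mem_filter.mp hk).2; omega
      rw [h3, pow_one]
    rw [h1, h2] at hexp
    -- analyze A
    have h0mem : 0 ∈ (Finset.range (p+1)).filter (fun k => k % 2 = 0) := by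
      simp [Finset.mem_filter]
    have hAval : g 0 + ∑ k ∈ ((Finset.range (p+1)).filter (fun k => k % 2 = 0)).erase 0, g k
        = A := Finset.add_sum_erase _ g h0mem
    have hg0 : g 0 = 1 := by simp [hg]
    have hdvdA : (p:ℤ_[p]) ∣ ∑ k ∈ ((Finset.range (p+1)).filter (fun k => k % 2 = 0)).erase 0,
        g k := by
      apply Finset.dvd_sum
      intro k hk
      have hk0 : k ≠ 0 := (Finset.mem_erase.mp hk).1
      have hke : k % 2 = 0 := (Finset.mem_filter.mp (Finset.mem_erase.mp hk).2).2
      have hk2 : k / 2 ≠ 0 := by omega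
      have : (p:ℤ_[p]) ∣ (d:ℤ_[p])^(k/2) := hpd.trans (dvd_pow_self _ hk2)
      exact Dvd.dvd.mul_left this _
    obtain ⟨γ, hγ⟩ := hdvdA
    -- analyze B
    have h1mem : 1 ∈ (Finset.range (p+1)).filter (fun k => ¬ k % 2 = 0) := by
      simp [Finset.mem_filter]
      omega
    have hBval : g 1 + ∑ k ∈ ((Finset.range (p+1)).filter (fun k => ¬ k % 2 = 0)).erase 1, g k
        = B := Finset.add_sum_erase _ g h1mem
    have hg1 : g 1 = (p:ℤ_[p]) * t := by simp [hg]
    have hdvdB : ((p:ℤ_[p]) * (d:ℤ_[p]) * t^3) ∣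
        ∑ k ∈ ((Finset.range (p+1)).filter (fun k => ¬ k % 2 = 0)).erase 1, g k := by
      apply Finset.dvd_sum
      intro k hk
      have hk1 : k ≠ 1 := (Finset.mem_erase.mp hk).1
      have hkm := Finset.mem_filter.mp (Finset.mem_erase.mp hk).2
      have hkr : k < p + 1 := Finset.mem_range.mp hkm.1
      have hke : k % 2 = 1 := by have := hkm.2; omega
      have hk3 : 3 ≤ k := by omega
      by_cases hkp : k = p
      · have hgp : g k = (d:ℤ_[p])^(k/2) * t^k := by
          rw [hg, hkp]; simp [Nat.choose_self]; ring
        rw [hgp]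
        have hd2 : ((p:ℤ_[p]) * (d:ℤ_[p])) ∣ (d:ℤ_[p])^2 := ⟨m, by rw [hm]; ring⟩
        have h22 : 2 ≤ k / 2 := by omega
        exact mul_dvd_mul (hd2.trans (pow_dvd_pow _ h22)) (pow_dvd_pow t hk3)
      · have hkp' : k < p := by omega
        have hpc : (p:ℤ_[p]) ∣ ((p.choose k : ℕ) : ℤ_[p]) := by
          have := Nat.Prime.dvd_choose_self hp (by omega : k ≠ 0) hkp'
          exact_mod_cast Nat.cast_dvd_cast (α := ℤ_[p]) this
        have hgk : g k = ((p.choose k : ℕ) : ℤ_[p]) * (d:ℤ_[p])^(k/2) * t^k := by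
          rw [hg]; ring
        rw [hgk]
        have hdd : (d:ℤ_[p]) ∣ (d:ℤ_[p])^(k/2) := dvd_pow_self _ (by omega)
        exact mul_dvd_mul (mul_dvd_mul hpc hdd) (pow_dvd_pow t hk3)
    obtain ⟨w, hw⟩ := hdvdB
    exact ⟨A, B, γ, w, hexp, by rw [← hAval, hg0, hγ], by rw [← hBval, hg1, hw]⟩
  -- the distinguished unit v = 1 + π
  set v : Oˣ := U 1 with hv
  have hvval : (v : O) = 1 + π := by rw [hv, hU 1, map_one, one_mul]
  -- powers of v
  have hpow : ∀ s : ℕ, ∃ c e : ℤ_[p], IsUnit c ∧ IsUnit e ∧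
      ((v ^ (p^s) : Oˣ) : O) = alg c * (1 + alg ((p:ℤ_[p])^s * e) * π) := by
    intro s
    induction s with
    | zero =>
      refine ⟨1, 1, isUnit_one, isUnit_one, ?_⟩
      rw [pow_zero, pow_one, hvval]
      simp
    | succ s ih =>
      obtain ⟨c, e, hc, he, hce⟩ := ih
      obtain ⟨A, B, γ, w, hAB, hAγ, hBw⟩ := hbin ((p:ℤ_[p])^s * e)
      -- A is a unit
      have hAu : IsUnit A := by
        apply hu
        rintro ⟨x, hx⟩
        have : (p:ℤ_[p]) ∣ 1 := ⟨x - γ, by rw [hAγ] at hx; linear_combination hx⟩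
        exact hnu (isUnit_of_dvd_one this)
      obtain ⟨uA, huA⟩ := hAu
      have hA1 : A * ↑uA⁻¹ = 1 := by
        have := Units.mul_inv uA
        rwa [huA] at this
      -- B rewritten
      have hB2 : B = (p:ℤ_[p])^(s+1) * (e + (p:ℤ_[p])^(2*s+1) * m * e^3 * w) := by
        rw [hBw, hm]; ring
      set e' : ℤ_[p] := ↑uA⁻¹ * (e + (p:ℤ_[p])^(2*s+1) * m * e^3 * w) with he'
      have he'u : IsUnit e' := by
        rw [he']
        refine (Units.isUnit uA⁻¹).mul (hu ?_)
        rintro ⟨x, hx⟩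
        have : (p:ℤ_[p]) ∣ e := ⟨x - (p:ℤ_[p])^(2*s)*m*e^3*w, by linear_combination hx⟩
        exact hnd he this
      refine ⟨c^p * A, e', (hc.pow p).mul ⟨uA, huA⟩, he'u, ?_⟩
      have hstep : ((v ^ (p^(s+1)) : Oˣ) : O) = (alg c)^p * (alg A + alg B * π) := by
        rw [pow_succ, pow_mul, Units.val_pow_eq_pow_val, hce, mul_pow, hAB]
      rw [hstep]
      have key : (c^p * A) * ((p:ℤ_[p])^(s+1) * e') = c^p * B := by
        rw [hB2, he']
        linear_combination (c^p * (p:ℤ_[p])^(s+1) *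
          (e + (p:ℤ_[p])^(2*s+1) * m * e^3 * w)) * hA1
      have keyO : (alg c)^p * alg A * ((alg (p:ℤ_[p]))^(s+1) * alg e') = (alg c)^p * alg B := by
        have h5 := congrArg alg key
        simpa only [map_mul, map_pow] using h5
      simp only [map_mul, map_pow]
      linear_combination (-π) * keyO
  -- the two decisive powers of v
  obtain ⟨cr, er, hcr, her, hver⟩ := hpow r
  obtain ⟨r', hr'⟩ : ∃ r', r = r' + 1 := ⟨r-1, by omega⟩
  obtain ⟨cs, es, hcs, hes, hves⟩ := hpow r'
  have hvrH : v ^ (p^r) ∈ H := by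
    have hco : ((v ^ (p^r) : Oˣ) : O) = alg cr + alg (cr * ((p:ℤ_[p])^r * er)) * π := by
      rw [hver]; simp only [map_mul, map_add, map_one]; ring
    rw [hcrit (v ^ (p^r)) _ _ hcr hco]
    exact ⟨cr * er, by ring⟩
  have hvsH : v ^ (p^r') ∉ H := by
    have hco : ((v ^ (p^r') : Oˣ) : O)
        = alg cs + alg (cs * ((p:ℤ_[p])^r' * es)) * π := by
      rw [hves]; simp only [map_mul, map_add, map_one]; ring
    rw [hcrit (v ^ (p^r')) _ _ hcs hco]
    rintro ⟨x, hx⟩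
    have hp0 : ((p:ℤ_[p]))^r' ≠ 0 := pow_ne_zero _ (by
      exact_mod_cast hp.ne_zero)
    have hdvd : (p:ℤ_[p]) ∣ cs * es := by
      rw [hr'] at hx
      have h2 : ((p:ℤ_[p]))^r' * (cs * es) = ((p:ℤ_[p]))^r' * ((p:ℤ_[p]) * x) := by
        linear_combination hx
      exact ⟨x, mul_left_cancel₀ hp0 h2⟩
    exact hnd (hcs.mul hes) hdvd
  haveI hnorm : H.Normal := H.normal_of_comm
  have hq1 : (QuotientGroup.mk v : Oˣ ⧸ H) ^ (p^r) = 1 := by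
    rw [← QuotientGroup.mk_pow, QuotientGroup.eq_one_iff]
    exact hvrH
  have hq2 : (QuotientGroup.mk v : Oˣ ⧸ H) ^ (p^r') ≠ 1 := by
    intro h
    rw [← QuotientGroup.mk_pow, QuotientGroup.eq_one_iff] at h
    exact hvsH h
  have horder : orderOf (QuotientGroup.mk v : Oˣ ⧸ H) = p^r := by
    have h1 := orderOf_dvd_of_pow_eq_one hq1
    obtain ⟨i, hi, hoi⟩ := (Nat.dvd_prime_pow hp).mp h1
    have hir : i = r := by
      by_contra hir
      have hile : i ≤ r' := by omega
      have h3 : orderOf (QuotientGroup.mk v : Oˣ ⧸ H) ∣ p^r' :=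
        hoi ▸ pow_dvd_pow p hile
      exact hq2 (orderOf_dvd_iff_pow_eq_one.mp h3)
    rw [hoi, hir]
  -- surjection from Fin (p^r) onto the quotient
  have hsurj : Function.Surjective
      (fun i : Fin (p^r) => (QuotientGroup.mk (U (((i:ℕ):ℤ_[p]))) : Oˣ ⧸ H)) := by
    intro y
    obtain ⟨x, rfl⟩ := QuotientGroup.mk_surjective y
    obtain ⟨a, b, ha, hx⟩ := hux x
    obtain ⟨ua, hua⟩ := ha
    set z : ℤ_[p] := b * ↑ua⁻¹ with hz
    have hlt : z.appr r < p^r := PadicInt.appr_lt z r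
    refine ⟨⟨z.appr r, hlt⟩, ?_⟩
    show (QuotientGroup.mk (U (((z.appr r : ℕ):ℤ_[p]))) : Oˣ ⧸ H) = QuotientGroup.mk x
    set c : ℤ_[p] := ((z.appr r : ℕ) : ℤ_[p]) with hc
    apply QuotientGroup.eq.mpr
    obtain ⟨ν, hνu, hν⟩ := hUinv c
    have haua : a * ↑ua⁻¹ = 1 := by
      have := Units.mul_inv ua
      rwa [hua] at this
    have hco : (((U c)⁻¹ * x : Oˣ) : O)
        = alg (ν*(a - (d:ℤ_[p])*(c*b))) + alg (ν*(b - a*c)) * π := by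
      rw [Units.val_mul, hν, hx]
      simp only [map_mul, map_sub, map_add, map_one]
      linear_combination (- alg ν * alg c * alg b) * hπ
    have hun : IsUnit (ν*(a - (d:ℤ_[p])*(c*b))) := by
      apply hνu.mul
      apply hu
      intro hdvd
      have h4 : (p:ℤ_[p]) ∣ a := by
        have h5 : (p:ℤ_[p]) ∣ (d:ℤ_[p])*(c*b) := hpd.mul_right _
        have := dvd_add hdvd h5
        rwa [sub_add_cancel] at this
      exact hnd ⟨ua, hua⟩ h4
    rw [hcrit ((U c)⁻¹ * x) _ _ hun hco]
    have hb : b - a * c = a * (z - c) := by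
      rw [hz]
      linear_combination (-b) * haua
    have happr : ((p:ℤ_[p]))^r ∣ z - c := by
      have h6 := PadicInt.appr_spec r z
      rwa [Ideal.mem_span_singleton] at h6
    rw [hb]
    have h7 := happr.mul_left (ν * a)
    rwa [mul_assoc] at h7
  haveI hfin : Finite (Oˣ ⧸ H) := Finite.of_surjective _ hsurj
  have hle : Nat.card (Oˣ ⧸ H) ≤ p^r := by
    have h8 := Nat.card_le_card_of_surjective _ hsurj
    simpa using h8
  have hdvd : p^r ∣ Nat.card (Oˣ ⧸ H) := horder ▸ orderOf_dvd_natCard _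
  have hpos : 0 < Nat.card (Oˣ ⧸ H) := Nat.card_pos
  have hcard : Nat.card (Oˣ ⧸ H) = p^r := le_antisymm hle (Nat.le_of_dvd hpos hdvd)
  refine ⟨hcard, v, hvval, ?_⟩
  apply Subgroup.eq_top_of_card_eq
  rw [Nat.card_zpowers, horder, hcard]
end
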